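/- arXiv:1206.5628 — 3 statements merged into one kernel-verified Lean document; each statement's English description precedes it below -/
import Mathlib

section
/- Let g : ℝ → ℝ be three times differentiable and convex (g''(t) ≥ 0 for all t), and let S > 0 satisfy |g'''(t)| ≤ S·g''(t) for all t ∈ ℝ. Then for all t ≥ 0, (g''(0)/S²)·φ(S·t) ≤ g(t) − g(0) − g'(0)·t ≤ (g''(0)/S²)·φ(−S·t). -/
/-!
Writing `h = g''`, the hypothesis `|h'| ≤ S h` is a two-sided Grönwall inequality, so
`h 0 * exp (-S x) ≤ h x ≤ h 0 * exp (S x)` for `x ≥ 0`. Integrating these bounds twice from `0`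
gives the claim, since `x ↦ (exp (c x) - c x - 1) / c ^ 2` is the solution of `F'' = exp (c x)`
with `F 0 = F' 0 = 0`; the lower bound is the upper one for `-g` with `c = -S`.
-/

open Real

theorem le_of_hasDerivAt_le {f f' g g' : ℝ → ℝ} {a t : ℝ}
    (hf : ∀ x, a ≤ x → HasDerivAt f (f' x) x) (hg : ∀ x, a ≤ x → HasDerivAt g (g' x) x)
    (ha : f a ≤ g a) (hle : ∀ x, a ≤ x → f' x ≤ g' x) (ht : a ≤ t) : f t ≤ g t := by
  have hd : ∀ x, a ≤ x → HasDerivAt (fun y => g y - f y) (g' x - f' x) x :=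
    fun x hx => (hg x hx).sub (hf x hx)
  have hmono : MonotoneOn (fun y => g y - f y) (Set.Ici a) :=
    monotoneOn_of_hasDerivWithinAt_nonneg (convex_Ici a)
      (fun x hx => (hd x hx).continuousAt.continuousWithinAt)
      (fun x hx => (hd x (interior_subset hx)).hasDerivWithinAt)
      (fun x hx => sub_nonneg.2 (hle x (interior_subset hx)))
  linarith [hmono Set.self_mem_Ici ht ht]

theorem le_of_hasDerivAt_le₂ {f f' f'' g g' g'' : ℝ → ℝ} {a t : ℝ}
    (hf : ∀ x, a ≤ x → HasDerivAt f (f' x) x) (hf' : ∀ x, a ≤ x → HasDerivAt f' (f'' x) x)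
    (hg : ∀ x, a ≤ x → HasDerivAt g (g' x) x) (hg' : ∀ x, a ≤ x → HasDerivAt g' (g'' x) x)
    (ha : f a ≤ g a) (ha' : f' a ≤ g' a) (hle : ∀ x, a ≤ x → f'' x ≤ g'' x) (ht : a ≤ t) :
    f t ≤ g t :=
  le_of_hasDerivAt_le hf hg ha (fun _ hx => le_of_hasDerivAt_le hf' hg' ha' hle hx) ht

theorem hasDerivAt_exp_const_mul (c x : ℝ) :
    HasDerivAt (fun y => exp (c * y)) (c * exp (c * x)) x := by
  simpa [mul_comm] using ((hasDerivAt_id x).const_mul c).exp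

theorem le_mul_exp_of_hasDerivAt_le_mul {h h' : ℝ → ℝ} {c t : ℝ}
    (hh : ∀ x, 0 ≤ x → HasDerivAt h (h' x) x) (hle : ∀ x, 0 ≤ x → h' x ≤ c * h x)
    (ht : 0 ≤ t) : h t ≤ h 0 * exp (c * t) := by
  have hd : ∀ x, 0 ≤ x → HasDerivAt (fun y => h y * exp (-c * y))
      ((h' x - c * h x) * exp (-c * x)) x := fun x hx =>
    ((hh x hx).mul (hasDerivAt_exp_const_mul (-c) x)).congr_deriv (by ring)
  have key : h t * exp (-c * t) ≤ h 0 :=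
    le_of_hasDerivAt_le (g' := 0) hd (fun _ _ => hasDerivAt_const _ _) (by simp)
      (fun x hx => mul_nonpos_of_nonpos_of_nonneg (by linarith [hle x hx]) (exp_pos _).le) ht
  rwa [neg_mul, exp_neg, mul_inv_le_iff₀ (exp_pos _)] at key

theorem sub_sub_mul_le_of_le_mul_exp {f f' f'' : ℝ → ℝ} {a c t : ℝ} (hc : c ≠ 0)
    (hf : ∀ x, 0 ≤ x → HasDerivAt f (f' x) x) (hf' : ∀ x, 0 ≤ x → HasDerivAt f' (f'' x) x)
    (hle : ∀ x, 0 ≤ x → f'' x ≤ a * exp (c * x)) (ht : 0 ≤ t) :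
    f t - f 0 - f' 0 * t ≤ a / c ^ 2 * (exp (c * t) - c * t - 1) := by
  have hF : ∀ x, HasDerivAt (fun y => a / c ^ 2 * (exp (c * y) - c * y - 1))
      (a / c * (exp (c * x) - 1)) x := fun x =>
    ((((hasDerivAt_exp_const_mul c x).sub ((hasDerivAt_id x).const_mul c)).sub_const 1).const_mul
      (a / c ^ 2)).congr_deriv (by field_simp)
  have hF' : ∀ x, HasDerivAt (fun y => a / c * (exp (c * y) - 1)) (a * exp (c * x)) x := fun x =>
    (((hasDerivAt_exp_const_mul c x).sub_const 1).const_mul (a / c)).congr_deriv (by field_simp)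
  exact le_of_hasDerivAt_le₂ (f := fun y => f y - f 0 - f' 0 * y) (f' := fun y => f' y - f' 0)
    (fun x hx => (((hf x hx).sub_const _).sub ((hasDerivAt_id x).const_mul _)).congr_deriv
      (by simp)) (fun x hx => (hf' x hx).sub_const _) (fun x _ => hF x) (fun x _ => hF' x)
    (by simp) (by simp) hle ht

theorem self_concordant_taylor_bounds_general
    (g : ℝ → ℝ) (S : ℝ) (hS : 0 < S)
    (hg1 : Differentiable ℝ g)
    (hg2 : Differentiable ℝ (deriv g))
    (hg3 : Differentiable ℝ (deriv (deriv g)))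
    (hsc : ∀ t, |deriv (deriv (deriv g)) t| ≤ S * deriv (deriv g) t)
    (t : ℝ) (ht : 0 ≤ t) :
    (deriv (deriv g) 0 / S ^ 2) * (Real.exp (-(S * t)) + S * t - 1)
        ≤ g t - g 0 - deriv g 0 * t ∧
      g t - g 0 - deriv g 0 * t
        ≤ (deriv (deriv g) 0 / S ^ 2) * (Real.exp (S * t) - S * t - 1) := by
  set h := deriv (deriv g)
  have hg : ∀ x, HasDerivAt g (deriv g x) x := fun x => (hg1 x).hasDerivAt
  have hg' : ∀ x, HasDerivAt (deriv g) (h x) x := fun x => (hg2 x).hasDerivAt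
  have hh : ∀ x, HasDerivAt h (deriv h x) x := fun x => (hg3 x).hasDerivAt
  have hderiv_h : ∀ x, -(S * h x) ≤ deriv h x ∧ deriv h x ≤ S * h x := fun x => abs_le.mp (hsc x)
  have h_upper : ∀ x, 0 ≤ x → h x ≤ h 0 * exp (S * x) := fun _ hx =>
    le_mul_exp_of_hasDerivAt_le_mul (fun y _ => hh y) (fun y _ => (hderiv_h y).2) hx
  have h_lower : ∀ x, 0 ≤ x → -h x ≤ -h 0 * exp (-S * x) := fun _ hx =>
    le_mul_exp_of_hasDerivAt_le_mul (h := fun y => -h y) (fun y _ => (hh y).neg)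
      (fun y _ => by linarith [(hderiv_h y).1]) hx
  constructor
  · have := sub_sub_mul_le_of_le_mul_exp (f := fun x => -g x) (neg_ne_zero.2 hS.ne')
      (fun x _ => (hg x).neg) (fun x _ => (hg' x).neg) h_lower ht
    simp only [neg_mul, neg_sq, sub_neg_eq_add, neg_div] at this
    linarith
  · exact sub_sub_mul_le_of_le_mul_exp hS.ne' (fun x _ => hg x) (fun x _ => hg' x) h_upper ht

/-- Bach's self-concordance-type lemma (Lemma 1 of Bach):
lower and upper Taylor-like expansions with `φ(u) = e^{-u} + u - 1`. -/
theorem self_concordant_taylor_bounds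
    (g : ℝ → ℝ) (S : ℝ) (hS : 0 < S)
    (hg1 : Differentiable ℝ g)
    (hg2 : Differentiable ℝ (deriv g))
    (hg3 : Differentiable ℝ (deriv (deriv g)))
    (hconv : ∀ t, 0 ≤ deriv (deriv g) t)
    (hsc : ∀ t, |deriv (deriv (deriv g)) t| ≤ S * deriv (deriv g) t)
    (t : ℝ) (ht : 0 ≤ t) :
    (deriv (deriv g) 0 / S ^ 2) * (Real.exp (-(S * t)) + S * t - 1)
        ≤ g t - g 0 - deriv g 0 * t ∧
      g t - g 0 - deriv g 0 * t
        ≤ (deriv (deriv g) 0 / S ^ 2) * (Real.exp (S * t) - S * t - 1) :=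
  self_concordant_taylor_bounds_general g S hS hg1 hg2 hg3 hsc t ht
end

section
/- The function q : ℝ → ℝ defined by q(t) = (e^{−t} + t − 1)/t² for t ≠ 0 and q(0) = 1/2 is nonincreasing on ℝ: for all real s ≤ t, q(s) ≥ q(t). -/
/-!
Taylor's formula with integral remainder gives `e^{-t} + t - 1 = t² ∫₀¹ (1 - u) e^{-tu} du`, so
`q(t) = ∫₀¹ (1 - u) e^{-tu} du` for every `t`, including `t = 0`. The integrand is nonincreasing
in `t` because `1 - u ≥ 0` and `u ≥ 0` on `[0, 1]`.
-/

open Real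

namespace PhiDivSq

noncomputable def taylorKernelIntegral (t : ℝ) : ℝ :=
  ∫ u in (0 : ℝ)..1, (1 - u) * exp (-t * u)

theorem intervalIntegrable_taylorKernel (t : ℝ) :
    IntervalIntegrable (fun u : ℝ => (1 - u) * exp (-t * u)) MeasureTheory.volume 0 1 :=
  (by fun_prop : Continuous fun u : ℝ => (1 - u) * exp (-t * u)).intervalIntegrable 0 1

theorem hasDerivAt_taylorKernel_antideriv {t : ℝ} (ht : t ≠ 0) (u : ℝ) :
    HasDerivAt (fun u : ℝ => (u / t + (1 - t) / t ^ 2) * exp (-t * u))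
      ((1 - u) * exp (-t * u)) u := by
  have hlin : HasDerivAt (fun u : ℝ => u / t + (1 - t) / t ^ 2) (1 / t) u := by
    simpa using ((hasDerivAt_id u).div_const t).add_const ((1 - t) / t ^ 2)
  have hexp : HasDerivAt (fun u : ℝ => exp (-t * u)) (exp (-t * u) * -t) u := by
    simpa using ((hasDerivAt_id u).const_mul (-t)).exp
  refine (hlin.mul hexp).congr_deriv ?_
  field_simp
  ring

theorem taylorKernelIntegral_of_ne_zero {t : ℝ} (ht : t ≠ 0) :
    taylorKernelIntegral t = (exp (-t) + t - 1) / t ^ 2 := by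
  rw [taylorKernelIntegral, intervalIntegral.integral_eq_sub_of_hasDerivAt
    (fun u _ => hasDerivAt_taylorKernel_antideriv ht u) (intervalIntegrable_taylorKernel t)]
  field_simp
  simp only [mul_zero, neg_zero, exp_zero]
  ring

theorem taylorKernelIntegral_zero : taylorKernelIntegral 0 = 1 / 2 := by
  simp only [taylorKernelIntegral, neg_zero, zero_mul, exp_zero, mul_one]
  rw [intervalIntegral.integral_comp_sub_left (fun x => x)]
  norm_num [integral_id]

theorem taylorKernelIntegral_eq (t : ℝ) :
    taylorKernelIntegral t = if t = 0 then 1 / 2 else (exp (-t) + t - 1) / t ^ 2 := by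
  split_ifs with ht
  · rw [ht, taylorKernelIntegral_zero]
  · exact taylorKernelIntegral_of_ne_zero ht

theorem antitone_taylorKernelIntegral : Antitone taylorKernelIntegral := by
  intro s t hst
  refine intervalIntegral.integral_mono_on zero_le_one (intervalIntegrable_taylorKernel t)
    (intervalIntegrable_taylorKernel s) fun u ⟨hu₀, hu₁⟩ => ?_
  exact mul_le_mul_of_nonneg_left (exp_le_exp.mpr (by nlinarith)) (by linarith)

end PhiDivSq

/-- The function `q(t) = φ(t)/t² = (e^{-t} + t - 1)/t²` (extended by `1/2` at `0`)
is nonincreasing on all of `ℝ`. -/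
theorem phi_div_sq_antitone :
    ∀ s t : ℝ, s ≤ t →
      (if t = 0 then (1:ℝ)/2 else (Real.exp (-t) + t - 1) / t ^ 2)
        ≤ (if s = 0 then (1:ℝ)/2 else (Real.exp (-s) + s - 1) / s ^ 2) := by
  intro s t hst
  rw [← PhiDivSq.taylorKernelIntegral_eq, ← PhiDivSq.taylorKernelIntegral_eq]
  exact PhiDivSq.antitone_taylorKernelIntegral hst
end

section
/- Let H and G be M×M real matrices, s ∈ {1,…,M}, a0 > 0, κ0 > 0 and t ≥ 0. Assume H satisfies RE(s, a0) with constant κ0, and that |G_{jk} − H_{jk}| ≤ t for all j, k ∈ {1,…,M}. Then for every index set J ⊆ {1,…,M} with |J| ≤ s and every b ∈ ℝ^M with ‖b_{J^c}‖₁ ≤ a0·‖b_J‖₁, one has bᵀ G b ≥ (κ0² − t·(1+a0)²·s)·‖b_J‖₂². -/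
open Finset

/-- Deterministic perturbation of the restricted eigenvalue condition:
if `H` satisfies RE(s, a0) with constant `κ0` and `|G_{jk} − H_{jk}| ≤ t` entrywise,
then for every admissible cone vector `b`,
`bᵀ G b ≥ (κ0² − t(1+a0)²s)·‖b_J‖₂²`. -/
theorem RE_perturbation
    (M : ℕ) (H G : Matrix (Fin M) (Fin M) ℝ)
    (s : ℕ) (hs1 : 1 ≤ s) (hsM : s ≤ M)
    (a0 κ0 t : ℝ) (ha0 : 0 < a0) (hκ0 : 0 < κ0) (ht : 0 ≤ t)
    (hRE : ∀ J : Finset (Fin M), J.card ≤ s → ∀ b : Fin M → ℝ,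
      (∑ j ∈ Jᶜ, |b j|) ≤ a0 * ∑ j ∈ J, |b j| →
      κ0 ^ 2 * ∑ j ∈ J, (b j) ^ 2 ≤ ∑ j, ∑ k, b j * H j k * b k)
    (hpert : ∀ j k, |G j k - H j k| ≤ t) :
    ∀ J : Finset (Fin M), J.card ≤ s → ∀ b : Fin M → ℝ,
      (∑ j ∈ Jᶜ, |b j|) ≤ a0 * ∑ j ∈ J, |b j| →
      (κ0 ^ 2 - t * (1 + a0) ^ 2 * s) * ∑ j ∈ J, (b j) ^ 2
        ≤ ∑ j, ∑ k, b j * G j k * b k := by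
  intro J hJ b hb
  have hH := hRE J hJ b hb
  set Q := ∑ j ∈ J, (b j) ^ 2 with hQdef
  have hQ : 0 ≤ Q := Finset.sum_nonneg fun _ _ => sq_nonneg _
  have hS1 : 0 ≤ ∑ j ∈ J, |b j| := Finset.sum_nonneg fun _ _ => abs_nonneg _
  have hsplit : ∑ j, |b j| = ∑ j ∈ J, |b j| + ∑ j ∈ Jᶜ, |b j| :=
    (Finset.sum_add_sum_compl J _).symm
  have hL1 : ∑ j, |b j| ≤ (1 + a0) * ∑ j ∈ J, |b j| := by
    rw [hsplit]; linarith
  have hCS : (∑ j ∈ J, |b j|) ^ 2 ≤ (s : ℝ) * Q := by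
    calc (∑ j ∈ J, |b j|) ^ 2 ≤ (J.card : ℝ) * ∑ j ∈ J, |b j| ^ 2 := by
          exact_mod_cast sq_sum_le_card_mul_sum_sq (s := J) (f := fun j => |b j|)
      _ ≤ (s : ℝ) * Q := by
          rw [hQdef]
          simp only [sq_abs]
          apply mul_le_mul_of_nonneg_right _ (Finset.sum_nonneg fun _ _ => sq_nonneg _)
          exact_mod_cast hJ
  have hL1nn : 0 ≤ ∑ j, |b j| := Finset.sum_nonneg fun _ _ => abs_nonneg _
  have hdiff : ∑ j, ∑ k, (b j * H j k * b k - t * (|b j| * |b k|))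
      ≤ ∑ j, ∑ k, b j * G j k * b k := by
    apply Finset.sum_le_sum; intro j _
    apply Finset.sum_le_sum; intro k _
    have h1 : |b j * G j k * b k - b j * H j k * b k| ≤ t * (|b j| * |b k|) := by
      have e : b j * G j k * b k - b j * H j k * b k = (G j k - H j k) * (b j * b k) := by ring
      rw [e, abs_mul, abs_mul]
      exact mul_le_mul_of_nonneg_right (hpert j k) (by positivity)
    linarith [neg_abs_le (b j * G j k * b k - b j * H j k * b k)]
  have hsum : ∑ j, ∑ k, (b j * H j k * b k - t * (|b j| * |b k|))
      = (∑ j, ∑ k, b j * H j k * b k) - t * (∑ j, |b j|) ^ 2 := by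
    rw [sq, Finset.sum_mul_sum, Finset.mul_sum]
    simp_rw [Finset.mul_sum, Finset.sum_sub_distrib]
  rw [hsum] at hdiff
  have ht2 : t * (∑ j, |b j|) ^ 2 ≤ t * ((1 + a0) ^ 2 * ((s : ℝ) * Q)) := by
    apply mul_le_mul_of_nonneg_left _ ht
    calc (∑ j, |b j|) ^ 2 ≤ ((1 + a0) * ∑ j ∈ J, |b j|) ^ 2 := by
          apply sq_le_sq' _ hL1; linarith
      _ = (1 + a0) ^ 2 * (∑ j ∈ J, |b j|) ^ 2 := by ring
      _ ≤ (1 + a0) ^ 2 * ((s : ℝ) * Q) := by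
          apply mul_le_mul_of_nonneg_left hCS; positivity
  nlinarith [hdiff, hH, ht2]
end
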